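/- arXiv:2601.21901 — 3 statements merged into one kernel-verified Lean document; each statement's English description precedes it below -/
import Mathlib

section
/- Let a, m be natural numbers with gcd(a,m) = 1. Then there exists an E'(a,m) polynomial if and only if there exists a Generalised Euclid–Mullin polynomial for the progression a mod m; that is, E'(a,m) ≠ ∅ ⟺ GEM(a,m) ≠ ∅. -/
open Polynomial

/-- `f` is an `E'(a,m)` polynomial: (i) `f(n)` has a prime divisor `p ≡ a (mod m)` for every
sufficiently large `n ∈ ℕ`, and (ii) for every prime `p ≡ a (mod m)` there exists `n ∈ ℤ`
with `p ∤ f(n)`. -/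
def IsEPoly (a m : ℕ) (f : Polynomial ℤ) : Prop :=
  (∃ N : ℕ, ∀ n : ℕ, N ≤ n → ∃ p : ℕ, p.Prime ∧ p ≡ a [MOD m] ∧ (p : ℤ) ∣ f.eval (n : ℤ)) ∧
  (∀ p : ℕ, p.Prime → p ≡ a [MOD m] → ∃ n : ℤ, ¬ (p : ℤ) ∣ f.eval n)

/-- `f` is a Generalised Euclid–Mullin polynomial for the progression `a mod m`:
(i) `f(1) ≠ 0` and (ii) for every positive `n` with `gcd(n, f(0)) = 1` and `n ≡ a^k (mod m)`
for some `k`, `f(n)` has a prime divisor `p` with `p ∤ f(0)` and `p ≡ a (mod m)`. -/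
def IsGEMPoly (a m : ℕ) (f : Polynomial ℤ) : Prop :=
  f.eval 1 ≠ 0 ∧
  ∀ n : ℕ, 0 < n → Int.gcd (n : ℤ) (f.eval 0) = 1 → (∃ k : ℕ, n ≡ a ^ k [MOD m]) →
    ∃ p : ℕ, p.Prime ∧ (p : ℤ) ∣ f.eval (n : ℤ) ∧ ¬ (p : ℤ) ∣ f.eval 0 ∧ p ≡ a [MOD m]


lemma coeff_pow_linear_dvd (r M : ℤ) (j k : ℕ) (hk : k ≠ 0) :
    M ∣ ((C r + C M * X) ^ j).coeff k := by
  induction j generalizing k with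
  | zero => simp [coeff_one, hk]
  | succ j ih =>
    rw [pow_succ, mul_comm, add_mul, coeff_add, coeff_C_mul, mul_assoc, coeff_C_mul]
    exact dvd_add ((ih k hk).mul_left r) (Dvd.intro _ rfl)

lemma coeff_comp_linear_dvd (f : Polynomial ℤ) (r M : ℤ) (k : ℕ) (hk : k ≠ 0) :
    M ∣ (f.comp (C r + C M * X)).coeff k := by
  induction f using Polynomial.induction_on' with
  | add p q hp hq => rw [add_comp, coeff_add]; exact dvd_add hp hq
  | monomial j a =>
    rw [monomial_comp, coeff_C_mul]
    exact (coeff_pow_linear_dvd r M j k hk).mul_left a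
open Polynomial

lemma exists_eval_ne_zero (f : Polynomial ℤ) (hf : f ≠ 0) (b c : ℕ) (hc : 0 < c) :
    ∃ k : ℕ, f.eval ((b + c * k : ℕ) : ℤ) ≠ 0 := by
  by_contra h
  push_neg at h
  apply hf
  apply f.eq_zero_of_infinite_isRoot
  refine Set.infinite_of_injective_forall_mem (f := fun k : ℕ => ((b + c * k : ℕ) : ℤ)) ?_ ?_
  · intro x y hxy
    simp only [Nat.cast_inj] at hxy
    exact Nat.eq_of_mul_eq_mul_left hc (Nat.add_left_cancel hxy)
  · intro k
    exact h k

lemma int_coprime_of_prime_not_dvd {p : ℕ} (hp : p.Prime) {z : ℤ} (h : ¬ (p : ℤ) ∣ z) :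
    IsCoprime z (p : ℤ) := by
  rw [Int.isCoprime_iff_gcd_eq_one]
  have : ¬ p ∣ z.natAbs := by
    intro hd
    exact h ((Int.natCast_dvd_natCast.mpr hd).trans (Int.natAbs_dvd.mpr dvd_rfl))
  simpa [Int.gcd, Nat.coprime_comm] using (Nat.Prime.coprime_iff_not_dvd hp).mpr this

lemma prime_modeq_not_dvd_m {a m p : ℕ} (hcop : Nat.gcd a m = 1) (hp : p.Prime)
    (hmod : p ≡ a [MOD m]) : ¬ p ∣ m := by
  intro hdvd
  have h1 : (m : ℤ) ∣ (a : ℤ) - (p : ℤ) := hmod.dvd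
  have h2 : (p : ℤ) ∣ (a : ℤ) := by
    have : (p : ℤ) ∣ (a : ℤ) - (p : ℤ) := dvd_trans (Int.natCast_dvd_natCast.mpr hdvd) h1
    simpa using this.add (dvd_refl (p : ℤ))
  have h3 : p ∣ a := Int.natCast_dvd_natCast.mp h2
  have : p ∣ Nat.gcd a m := Nat.dvd_gcd h3 hdvd
  rw [hcop] at this
  exact hp.one_lt.ne' (Nat.dvd_one.mp this)

lemma gem_to_e {a m : ℕ} (hm : 0 < m) (hcop : Nat.gcd a m = 1)
    (f : Polynomial ℤ) (hf : IsGEMPoly a m f) : ∃ g, IsEPoly a m g := by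
  classical
  obtain ⟨h1, h2⟩ := hf
  obtain ⟨p₁, hp₁p, hp₁d, hp₁0, hp₁a⟩ :=
    h2 1 one_pos (by simp [Int.gcd]) ⟨0, by simp [Nat.ModEq]⟩
  have hf0 : f.eval 0 ≠ 0 := by
    intro e
    rw [e] at hp₁0
    exact hp₁0 (dvd_zero _)
  have hfne : f ≠ 0 := fun e => h1 (by rw [e]; simp)
  set f0' : ℕ := (f.eval 0).natAbs with hf0'def
  have hf0' : f0' ≠ 0 := Int.natAbs_ne_zero.mpr hf0
  set c : ℕ := m * f0' with hcdef
  have hc : 0 < c := Nat.mul_pos hm (Nat.pos_of_ne_zero hf0')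
  obtain ⟨k₀, hr⟩ := exists_eval_ne_zero f hfne 1 c hc
  set r : ℕ := 1 + c * k₀ with hrdef
  set fr : ℤ := f.eval (r : ℤ) with hfrdef
  have hfr : fr ≠ 0 := hr
  set P : Finset ℕ := f0'.primeFactors.filter (fun p => (p : ℤ) ∣ fr ∧ p ≡ a [MOD m]) with hPdef
  -- basic facts about members of P
  have hPmem : ∀ p ∈ P, p.Prime ∧ p ∣ f0' := by
    intro p hp
    have := Finset.mem_filter.mp hp
    exact ⟨(Nat.mem_primeFactors.mp this.1).1, (Nat.mem_primeFactors.mp this.1).2.1⟩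
  set D : ℕ := ∏ p ∈ P, p ^ (fr.natAbs.factorization p) with hDdef
  have hD0 : D ≠ 0 := by
    apply Finset.prod_ne_zero_iff.mpr
    intro p hp
    exact pow_ne_zero _ (hPmem p hp).1.pos.ne'
  have hPsub : P ⊆ fr.natAbs.primeFactors := by
    intro p hp
    have h' := Finset.mem_filter.mp hp
    refine Nat.mem_primeFactors.mpr ⟨(hPmem p hp).1, ?_, Int.natAbs_ne_zero.mpr hfr⟩
    exact Int.natCast_dvd.mp h'.2.1
  have hDdvdN : D ∣ fr.natAbs := by
    have h1' : D ∣ ∏ p ∈ fr.natAbs.primeFactors, p ^ (fr.natAbs.factorization p) :=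
      Finset.prod_dvd_prod_of_subset _ _ _ hPsub
    have h2' : ∏ p ∈ fr.natAbs.primeFactors, p ^ (fr.natAbs.factorization p) = fr.natAbs := by
      rw [← Nat.support_factorization]
      exact Nat.factorization_prod_pow_eq_self (Int.natAbs_ne_zero.mpr hfr)
    exact h2' ▸ h1'
  have hDdvd : (D : ℤ) ∣ fr := dvd_trans (Int.natCast_dvd_natCast.mpr hDdvdN)
    (Int.natAbs_dvd.mpr dvd_rfl)
  set M : ℕ := c * D with hMdef
  have hM0 : M ≠ 0 := Nat.mul_ne_zero hc.ne' hD0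
  set F : Polynomial ℤ := f.comp (C (r : ℤ) + C (M : ℤ) * X) with hFdef
  have hCD : C (D : ℤ) ∣ F := by
    rw [Polynomial.C_dvd_iff_dvd_coeff]
    intro k
    rcases Nat.eq_zero_or_pos k with hk | hk
    · subst hk
      rw [Polynomial.coeff_zero_eq_eval_zero]
      have : F.eval 0 = fr := by simp [hFdef, eval_comp, hfrdef]
      rw [this]; exact hDdvd
    · refine dvd_trans ?_ (coeff_comp_linear_dvd f (r : ℤ) (M : ℤ) k hk.ne')
      exact_mod_cast Int.natCast_dvd_natCast.mpr (Dvd.intro_left c rfl)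
  obtain ⟨g, hg⟩ := hCD
  have key : ∀ z : ℤ, f.eval ((r : ℤ) + (M : ℤ) * z) = (D : ℤ) * g.eval z := by
    intro z
    have := congrArg (Polynomial.eval z) hg
    simpa [hFdef, eval_comp] using this
  have hDprime : ∀ q : ℕ, q.Prime → q ∣ D → (q : ℤ) ∣ f.eval 0 := by
    intro q hq hqD
    obtain ⟨p, hpP, hqp⟩ := (hq.prime.dvd_finset_prod_iff _).mp hqD
    have : q = p := (Nat.prime_dvd_prime_iff_eq hq (hPmem p hpP).1).mp
        (hq.dvd_of_dvd_pow hqp)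
    subst this
    have : (q : ℤ) ∣ (f0' : ℤ) := Int.natCast_dvd_natCast.mpr (hPmem q hpP).2
    exact this.trans (Int.natAbs_dvd.mpr dvd_rfl)
  refine ⟨g, ⟨0, ?_⟩, ?_⟩
  · -- condition (i)
    intro n _
    set s : ℕ := r + M * n with hsdef
    have hs : 0 < s := by positivity
    have hgcd : Int.gcd (s : ℤ) (f.eval 0) = 1 := by
      have hcopr : Nat.Coprime s f0' := by
        have : s = 1 + f0' * (m * k₀ + m * (D * n)) := by
          rw [hsdef, hrdef, hMdef, hcdef]; ring
        rw [this]
        exact (Nat.coprime_add_mul_left_left 1 f0' _).mpr (Nat.coprime_one_left f0')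
      simpa [Int.gcd] using hcopr
    have hcong : s ≡ a ^ 0 [MOD m] := by
      rw [pow_zero]
      refine ((Nat.modEq_iff_dvd' ?_).mpr ?_).symm
      · exact hs
      · refine ⟨f0' * k₀ + f0' * (D * n), ?_⟩
        have : s = 1 + (m * (f0' * k₀ + f0' * (D * n))) := by
          rw [hsdef, hrdef, hMdef, hcdef]; ring
        rw [this, Nat.add_sub_cancel_left]
    obtain ⟨q, hqp, hqd, hq0, hqa⟩ := h2 s hs hgcd ⟨0, hcong⟩
    have hqg : (q : ℤ) ∣ g.eval (n : ℤ) := by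
      have hseval : f.eval ((s : ℕ) : ℤ) = (D : ℤ) * g.eval (n : ℤ) := by
        rw [hsdef]
        push_cast
        exact key (n : ℤ)
      rw [hseval] at hqd
      rcases (Nat.prime_iff_prime_int.mp hqp).dvd_mul.mp hqd with h | h
      · exfalso
        exact hq0 (hDprime q hqp (Int.natCast_dvd_natCast.mp h))
      · exact h
    exact ⟨q, hqp, hqa, hqg⟩
  · -- condition (ii)
    intro p hp hpa
    by_cases hpf0 : (p : ℤ) ∣ f.eval 0
    · refine ⟨0, ?_⟩
      have hkey0 : (D : ℤ) * g.eval 0 = fr := by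
        have := key 0
        simpa using this.symm
      by_cases hpfr : (p : ℤ) ∣ fr
      · -- p ∈ P, exact valuation argument
        have hpP : p ∈ P := by
          refine Finset.mem_filter.mpr ⟨Nat.mem_primeFactors.mpr ⟨hp, ?_, hf0'⟩, hpfr, hpa⟩
          exact Int.natCast_dvd.mp hpf0
        set G0 : ℕ := (g.eval 0).natAbs with hG0def
        have hG0 : G0 ≠ 0 := by
          intro e
          apply hfr
          rw [← hkey0, Int.natAbs_eq_zero.mp e, mul_zero]
        have hDW : D * G0 = fr.natAbs := by
          have := congrArg Int.natAbs hkey0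
          simpa [Int.natAbs_mul] using this
        have hfact : fr.natAbs.factorization p = D.factorization p + G0.factorization p := by
          rw [← hDW, Nat.factorization_mul hD0 hG0]
          simp
        have hDfact : D.factorization p = fr.natAbs.factorization p := by
          rw [hDdef, Nat.factorization_prod (fun q hq => pow_ne_zero _ (hPmem q hq).1.pos.ne')]
          rw [Finset.sum_apply']
          rw [Finset.sum_eq_single p]
          · rw [(hPmem p hpP).1.factorization_pow]
            simp
          · intro q hq hqne
            rw [(hPmem q hq).1.factorization_pow]
            simp [Finsupp.single_apply, hqne]
          · intro h; exact absurd hpP h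
        have hG0fact : G0.factorization p = 0 := by omega
        have hpG0 : ¬ p ∣ G0 := by
          rcases (Nat.factorization_eq_zero_iff G0 p).mp hG0fact with h | h | h
          · exact absurd hp h
          · exact h
          · exact absurd h hG0
        intro hdvd
        exact hpG0 (Int.natCast_dvd.mp hdvd)
      · intro hpg
        exact hpfr (hkey0 ▸ hpg.mul_left (D : ℤ))
    · -- p does not divide f(0)
      have hpM : ¬ (p : ℤ) ∣ (M : ℤ) := by
        intro hdvd
        have hpMn : p ∣ M := Int.natCast_dvd_natCast.mp hdvd
        rw [hMdef, hcdef] at hpMn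
        rcases (Nat.Prime.dvd_mul hp).mp hpMn with h | h
        · rcases (Nat.Prime.dvd_mul hp).mp h with h' | h'
          · exact prime_modeq_not_dvd_m hcop hp hpa h'
          · exact hpf0 ((Int.natCast_dvd_natCast.mpr h').trans (Int.natAbs_dvd.mpr dvd_rfl))
        · exact hpf0 (hDprime p hp h)
      obtain ⟨x, y, hxy⟩ := int_coprime_of_prime_not_dvd hp hpM
      refine ⟨-(x * (r : ℤ)), ?_⟩
      intro hpg
      have hdvd1 : (p : ℤ) ∣ (r : ℤ) + (M : ℤ) * (-(x * (r : ℤ))) := by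
        refine ⟨(r : ℤ) * y, ?_⟩
        linear_combination (r : ℤ) * hxy.symm
      have hdiff := Polynomial.sub_dvd_eval_sub ((r : ℤ) + (M : ℤ) * (-(x * (r : ℤ)))) 0 f
      have hpdiff : (p : ℤ) ∣ f.eval ((r : ℤ) + (M : ℤ) * (-(x * (r : ℤ)))) - f.eval 0 := by
        refine dvd_trans hdvd1 ?_
        simpa using hdiff
      have hpev : (p : ℤ) ∣ f.eval ((r : ℤ) + (M : ℤ) * (-(x * (r : ℤ)))) := by
        rw [key]
        exact hpg.mul_left _
      exact hpf0 ((dvd_sub_right hpev).mp hpdiff)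
section Dir2
variable {a m : ℕ}

lemma e_to_gem (hm : 0 < m) (g : Polynomial ℤ) (hg : IsEPoly a m g) :
    ∃ f, IsGEMPoly a m f := by
  classical
  obtain ⟨⟨N, hi⟩, hii⟩ := hg
  obtain ⟨q₀, hq₀p, hq₀a, hq₀d⟩ := hi N le_rfl
  obtain ⟨n₀, hn₀⟩ := hii q₀ hq₀p hq₀a
  have hgne : g ≠ 0 := by
    intro e
    rw [e] at hn₀
    exact hn₀ (by simp)
  obtain ⟨k₁, hA⟩ := exists_eval_ne_zero g hgne N 1 one_pos
  set A : ℕ := N + 1 * k₁ with hAdef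
  have hAN : N ≤ A := Nat.le_add_right _ _
  set gA : ℤ := g.eval ((A : ℕ) : ℤ) with hgAdef
  have hgA : gA ≠ 0 := hA
  set S : Finset ℕ := gA.natAbs.primeFactors.filter (fun p => p ≡ a [MOD m]) with hSdef
  have hSmem : ∀ p ∈ S, p.Prime ∧ p ≡ a [MOD m] ∧ (p : ℤ) ∣ gA := by
    intro p hp
    have h' := Finset.mem_filter.mp hp
    exact ⟨(Nat.mem_primeFactors.mp h'.1).1, h'.2,
      ((Int.natCast_dvd_natCast.mpr (Nat.mem_primeFactors.mp h'.1).2.1).trans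
        (Int.natAbs_dvd.mpr dvd_rfl))⟩
  have hnp : ∀ p ∈ S, ∃ npv : ℤ, ¬ (p : ℤ) ∣ g.eval npv := by
    intro p hp
    exact hii p (hSmem p hp).1 (hSmem p hp).2.1
  choose! np hnpspec using hnp
  set QS : ℤ := ∏ q ∈ S, (q : ℤ) with hQSdef
  have hQS1 : 1 ≤ QS := by
    have : 0 < QS := Finset.prod_pos (fun q hq => by exact_mod_cast (hSmem q hq).1.pos)
    omega
  have hc : ∀ p ∈ S, ∃ cpv : ℤ, 0 ≤ cpv ∧ cpv ≡ (np p - (A : ℤ)) [ZMOD (p : ℕ)] ∧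
      ∀ q ∈ S, q ≠ p → (q : ℤ) ∣ cpv := by
    intro p hpS
    have hpprime := (hSmem p hpS).1
    set Qp : ℤ := ∏ q ∈ S.erase p, (q : ℤ) with hQpdef
    have hpQp : ¬ (p : ℤ) ∣ Qp := by
      intro hdvd
      obtain ⟨q, hq, hdq⟩ := ((Nat.prime_iff_prime_int.mp hpprime).dvd_finset_prod_iff _).mp hdvd
      have hqS := Finset.mem_of_mem_erase hq
      have : p = q := (Nat.prime_dvd_prime_iff_eq hpprime (hSmem q hqS).1).mp
        (Int.natCast_dvd_natCast.mp hdq)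
      exact Finset.ne_of_mem_erase hq this.symm
    obtain ⟨x, y, hxy⟩ := (int_coprime_of_prime_not_dvd hpprime hpQp)
    set c0 : ℤ := (np p - (A : ℤ)) * x * Qp with hc0def
    refine ⟨c0 + |c0| * QS, ?_, ?_, ?_⟩
    · have h1 : -|c0| ≤ c0 := neg_abs_le c0
      nlinarith [abs_nonneg c0]
    · have h1 : (p : ℤ) ∣ |c0| * QS := Dvd.dvd.mul_left (Finset.dvd_prod_of_mem _ hpS) _
      have h2 : c0 ≡ (np p - (A : ℤ)) [ZMOD (p : ℕ)] := by
        rw [Int.modEq_iff_dvd]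
        refine ⟨(np p - (A : ℤ)) * y, ?_⟩
        rw [hc0def]
        linear_combination ((A : ℤ) - np p) * hxy
      calc c0 + |c0| * QS ≡ c0 + 0 [ZMOD (p : ℕ)] := by
            exact Int.ModEq.add_left c0 ((Int.modEq_zero_iff_dvd).mpr h1)
        _ = c0 := by ring
        _ ≡ (np p - (A : ℤ)) [ZMOD (p : ℕ)] := h2
    · intro q hqS hqne
      refine dvd_add ?_ (Dvd.dvd.mul_left (Finset.dvd_prod_of_mem _ hqS) _)
      rw [hc0def]
      refine Dvd.dvd.mul_left ?_ _
      exact Finset.dvd_prod_of_mem _ (Finset.mem_erase.mpr ⟨hqne, hqS⟩)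
  choose! cp hcp using hc
  set u : Polynomial ℤ := Polynomial.C ((A : ℕ) : ℤ) +
    ∑ p ∈ S, Polynomial.C (cp p) * Polynomial.X ^ (p - 1) with hudef
  have hueval : ∀ z : ℤ, u.eval z = ((A : ℕ) : ℤ) + ∑ p ∈ S, cp p * z ^ (p - 1) := by
    intro z
    simp [hudef, Polynomial.eval_finset_sum]
  set f : Polynomial ℤ := g.comp u with hfdef
  have hfeval : ∀ z : ℤ, f.eval z = g.eval (u.eval z) := by
    intro z
    simp [hfdef, Polynomial.eval_comp]
  have hucong : ∀ p ∈ S, ∀ z : ℤ, (z ^ (p - 1) ≡ 1 [ZMOD (p : ℕ)]) →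
      (p : ℤ) ∣ (u.eval z - np p) := by
    intro p hpS z hz
    rw [hueval]
    rw [← Finset.add_sum_erase _ _ hpS]
    have h1 : (p : ℤ) ∣ ∑ q ∈ S.erase p, cp q * z ^ (q - 1) := by
      apply Finset.dvd_sum
      intro q hq
      exact Dvd.dvd.mul_right
        ((hcp q (Finset.mem_of_mem_erase hq)).2.2 p hpS (Finset.ne_of_mem_erase hq).symm) _
    have h2 : cp p * z ^ (p - 1) ≡ (np p - (A : ℤ)) * 1 [ZMOD (p : ℕ)] :=
      Int.ModEq.mul (hcp p hpS).2.1 hz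
    have h3 : ((A : ℕ) : ℤ) + (cp p * z ^ (p - 1) + ∑ q ∈ S.erase p, cp q * z ^ (q - 1)) ≡
        ((A : ℕ) : ℤ) + ((np p - (A : ℤ)) * 1 + 0) [ZMOD (p : ℕ)] :=
      Int.ModEq.add_left _ (Int.ModEq.add h2 ((Int.modEq_zero_iff_dvd).mpr h1))
    have h4 := Int.ModEq.dvd h3
    have : ((A : ℕ) : ℤ) + ((np p - (A : ℤ)) * 1 + 0) = np p := by ring
    rw [this] at h4
    exact dvd_sub_comm.mp h4
  refine ⟨f, ?_, ?_⟩
  · -- f.eval 1 ≠ 0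
    rcases S.eq_empty_or_nonempty with hS | ⟨p, hpS⟩
    · rw [hfeval 1, hueval 1, hS]
      simpa using hgA
    · intro hze
      rw [hfeval 1] at hze
      have hcong := hucong p hpS 1 (by simp)
      have hdvd : (p : ℤ) ∣ g.eval (u.eval 1) - g.eval (np p) :=
        dvd_trans hcong (Polynomial.sub_dvd_eval_sub _ _ g)
      rw [hze, zero_sub] at hdvd
      exact hnpspec p hpS ((dvd_neg).mp hdvd)
  · intro n hn hgcd _
    have hfeval0 : f.eval 0 = gA := by
      rw [hfeval 0, hueval 0]
      have : ∀ p ∈ S, cp p * (0 : ℤ) ^ (p - 1) = 0 := by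
        intro p hpS
        rw [zero_pow (by
          have := (hSmem p hpS).1.two_le
          omega), mul_zero]
      rw [Finset.sum_congr rfl this]
      simp [hgAdef]
    set wn : ℕ := A + ∑ p ∈ S, (cp p).toNat * n ^ (p - 1) with hwndef
    have hwncast : ((wn : ℕ) : ℤ) = u.eval ((n : ℕ) : ℤ) := by
      rw [hueval, hwndef]
      push_cast
      refine congrArg (_ + ·) ?_
      apply Finset.sum_congr rfl
      intro p hpS
      rw [Int.toNat_of_nonneg (hcp p hpS).1]
    have hwnN : N ≤ wn := le_trans hAN (Nat.le_add_right _ _)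
    obtain ⟨q, hqp, hqa, hqd⟩ := hi wn hwnN
    have hq0 : ¬ (q : ℤ) ∣ gA := by
      intro hqgA
      have hqS : q ∈ S := by
        refine Finset.mem_filter.mpr ⟨Nat.mem_primeFactors.mpr ⟨hqp, ?_, Int.natAbs_ne_zero.mpr hgA⟩, hqa⟩
        exact Int.natCast_dvd.mp hqgA
      have hqn : ¬ (q : ℤ) ∣ ((n : ℕ) : ℤ) := by
        intro hqn
        have hdg : (q : ℤ) ∣ (Int.gcd ((n : ℕ) : ℤ) (f.eval 0) : ℤ) := by
          rw [hfeval0]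
          exact Int.dvd_coe_gcd hqn hqgA
        rw [hgcd] at hdg
        have hq1 : (q : ℤ) = 1 := Int.eq_one_of_dvd_one (by positivity) (by exact_mod_cast hdg)
        exact hqp.one_lt.ne' (by exact_mod_cast hq1)
      have fermat : ((n : ℕ) : ℤ) ^ (q - 1) ≡ 1 [ZMOD (q : ℕ)] :=
        Int.ModEq.pow_card_sub_one_eq_one hqp (int_coprime_of_prime_not_dvd hqp hqn)
      have hdvd : (q : ℤ) ∣ g.eval (u.eval ((n : ℕ) : ℤ)) - g.eval (np q) :=
        dvd_trans (hucong q hqS _ fermat) (Polynomial.sub_dvd_eval_sub _ _ g)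
      have hqwn : (q : ℤ) ∣ g.eval (u.eval ((n : ℕ) : ℤ)) := by
        rw [← hwncast]
        exact hqd
      exact hnpspec q hqS ((dvd_sub_right hqwn).mp hdvd)
    refine ⟨q, hqp, ?_, ?_, hqa⟩
    · rw [hfeval, ← hwncast]
      exact hqd
    · rw [hfeval0]
      exact hq0
end Dir2

/-- For a coprime progression `a mod m`, there exists an `E'(a,m)` polynomial if and only if
there exists a Generalised Euclid–Mullin polynomial for the progression `a mod m`. -/
theorem ePoly_nonempty_iff_gemPoly_nonempty (a m : ℕ) (ha : 0 < a) (hm : 0 < m)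
    (hcop : Nat.gcd a m = 1) :
    (∃ f : Polynomial ℤ, IsEPoly a m f) ↔ (∃ f : Polynomial ℤ, IsGEMPoly a m f) := by
  constructor
  · rintro ⟨g, hg⟩
    exact e_to_gem hm g hg
  · rintro ⟨f, hf⟩
    exact gem_to_e hm hcop f hf
end

section
/- Suppose f ∈ ℤ[x] is a nonzero polynomial of even degree whose leading coefficient equals a² for some a ∈ ℤ. Then either f = g² for some polynomial g ∈ ℤ[x], or the set {n ∈ ℤ : f(n) is a perfect square} is finite. -/
open Polynomial Filter


lemma sq_gap (m q : ℤ) (h : m^2 ≠ q^2) : 2*|q| - 1 ≤ |m^2 - q^2| := by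
  have h1 : |m| ≠ |q| := by
    intro he
    apply h
    rw [← sq_abs m, ← sq_abs q, he]
  have hm : 0 ≤ |m| := abs_nonneg m
  have hq : 0 ≤ |q| := abs_nonneg q
  have e1 : m^2 = |m|^2 := (sq_abs m).symm
  have e2 : q^2 = |q|^2 := (sq_abs q).symm
  rw [e1, e2]
  rcases lt_or_gt_of_ne h1 with hlt | hgt
  · have : |m|^2 - |q|^2 < 0 := by nlinarith
    rw [abs_of_neg this]
    nlinarith [mul_nonneg (by omega : (0:ℤ) ≤ |q| - 1 - |m|) (by omega : (0:ℤ) ≤ |q| - 1 + |m|)]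
  · have : 0 < |m|^2 - |q|^2 := by nlinarith
    rw [abs_of_pos this]
    nlinarith


lemma approx_sqrt (e : ℕ) (p : Polynomial ℚ) (a : ℚ) (ha : a ≠ 0)
    (hd : ∀ i, 2*e < i → p.coeff i = 0) (hc : p.coeff (2*e) = a^2) :
    ∀ j, j ≤ e → ∃ q : Polynomial ℚ, q.coeff e = a ∧ (∀ i, e < i → q.coeff i = 0) ∧
      ∀ i, 2*e - j ≤ i → (p - q^2).coeff i = 0 := by
  intro j
  induction j with
  | zero =>
    intro _
    refine ⟨C a * X^e, ?_, ?_, ?_⟩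
    · simp
    · intro i hi
      simp [coeff_X_pow, Nat.ne_of_gt hi, (by omega : i ≠ e)]
    · intro i hi
      have hq2 : (C a * X^e)^2 = C (a^2) * X^(2*e) := by
        rw [mul_pow, ← C_pow, ← pow_mul']
      rw [coeff_sub, hq2, coeff_C_mul, coeff_X_pow]
      rcases eq_or_lt_of_le (by omega : 2*e ≤ i) with h | h
      · simp [← h, hc]
      · rw [hd i h, if_neg (by omega), mul_zero, sub_zero]
  | succ j ih =>
    intro hj
    obtain ⟨q, hqe, hqhi, hq⟩ := ih (by omega)
    set c : ℚ := (p - q^2).coeff (2*e - (j+1)) with hcdef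
    set b : ℚ := c / (2*a) with hbdef
    set k : ℕ := e - (j+1) with hkdef
    refine ⟨q + C b * X^k, ?_, ?_, ?_⟩
    · rw [coeff_add, hqe, coeff_C_mul, coeff_X_pow, if_neg (by omega), mul_zero, add_zero]
    · intro i hi
      rw [coeff_add, hqhi i hi, coeff_C_mul, coeff_X_pow, if_neg (by omega), mul_zero, add_zero]
    · intro i hi
      have expand : p - (q + C b * X^k)^2
          = (p - q^2) - (C (2*b) * (q * X^k) + C (b^2) * X^(2*k)) := by
        simp only [C_mul, C_pow, map_ofNat]
        ring
      rw [expand, coeff_sub, coeff_add, coeff_C_mul, coeff_C_mul, coeff_X_pow,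
        coeff_mul_X_pow', if_pos (by omega : k ≤ i)]
      rcases eq_or_lt_of_le hi with h | h
      · have hik : i - k = e := by omega
        rw [hik, hqe, ← h, if_neg (by omega), mul_zero, add_zero, hbdef]
        field_simp
        rw [hcdef, coeff_sub]
        ring
      · have h2 : 2*e - j ≤ i := by omega
        rw [hq i h2, hqhi (i - k) (by omega), if_neg (by omega)]
        ring


lemma clear_denoms (p : Polynomial ℚ) :
    ∃ (D : ℤ) (P : Polynomial ℤ), D ≠ 0 ∧ P.map (Int.castRingHom ℚ) = C (D:ℚ) * p := by
  induction p using Polynomial.induction_on' with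
  | add f g hf hg =>
    obtain ⟨D1, P1, hD1, h1⟩ := hf
    obtain ⟨D2, P2, hD2, h2⟩ := hg
    refine ⟨D1 * D2, C D2 * P1 + C D1 * P2, mul_ne_zero hD1 hD2, ?_⟩
    rw [Polynomial.map_add, Polynomial.map_mul, Polynomial.map_mul, map_C, map_C, h1, h2]
    push_cast [Int.coe_castRingHom, C_mul]
    ring
  | monomial n r =>
    refine ⟨(r.den : ℤ), C r.num * X^n, by exact_mod_cast r.den_ne_zero, ?_⟩
    have key : ((r.num : ℚ)) = (r.den : ℚ) * r := by
      have hd : ((r.den : ℚ)) ≠ 0 := by exact_mod_cast r.den_ne_zero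
      have h := Rat.num_div_den r
      rw [div_eq_iff hd] at h
      linarith
    rw [Polynomial.map_mul, map_C, Polynomial.map_pow, map_X,
      ← Polynomial.C_mul_X_pow_eq_monomial, ← mul_assoc, ← C_mul]
    have hxy : ((Int.castRingHom ℚ) r.num : ℚ) = (((r.den:ℤ)):ℚ) * r := by
      push_cast [Int.coe_castRingHom]
      exact key
    rw [hxy]


lemma real_bound (s q : Polynomial ℝ) (hq : 0 < q.degree) (hlt : s.degree < q.degree) :
    ∀ᶠ x : ℝ in atTop, |s.eval x| < 2 * |q.eval x| - 1 := by
  have h1 : Tendsto (fun x => |q.eval x|) atTop atTop := by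
    have := Polynomial.abs_tendsto_atTop q hq
    simpa [Function.comp] using this
  have h2 : Tendsto (fun x => s.eval x / q.eval x) atTop (nhds 0) :=
    Polynomial.div_tendsto_zero_of_degree_lt s q hlt
  have h3 : ∀ᶠ x in atTop, (4:ℝ) ≤ |q.eval x| := h1.eventually_ge_atTop 4
  have h4 : ∀ᶠ x in atTop, |s.eval x / q.eval x| < 1/2 := by
    have := h2.abs
    rw [abs_zero] at this
    exact this.eventually_lt_const (by norm_num)
  filter_upwards [h3, h4] with x hx3 hx4
  have hqx : q.eval x ≠ 0 := by
    intro h; rw [h] at hx3; simp at hx3; linarith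
  have : |s.eval x| = |s.eval x / q.eval x| * |q.eval x| := by
    rw [← abs_mul, div_mul_cancel₀ _ hqx]
  rw [this]
  nlinarith [abs_nonneg (s.eval x / q.eval x)]

lemma int_bound_atTop (S Q : Polynomial ℤ) (hq : 0 < Q.degree) (hlt : S.degree < Q.degree) :
    ∀ᶠ n : ℤ in atTop, |S.eval n| < 2 * |Q.eval n| - 1 := by
  have hinj : Function.Injective (Int.castRingHom ℝ) := Int.cast_injective
  set s := S.map (Int.castRingHom ℝ)
  set q := Q.map (Int.castRingHom ℝ)
  have hds : s.degree = S.degree := degree_map_eq_of_injective hinj S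
  have hdq : q.degree = Q.degree := degree_map_eq_of_injective hinj Q
  have hr := real_bound s q (by rwa [hdq]) (by rw [hds, hdq]; exact hlt)
  have hcast : Tendsto (fun n : ℤ => (n : ℝ)) atTop atTop := tendsto_intCast_atTop_atTop
  filter_upwards [hcast.eventually hr] with n hn
  have e1 : s.eval (n:ℝ) = ((S.eval n : ℤ) : ℝ) := eval_intCast_map (Int.castRingHom ℝ) S n
  have e2 : q.eval (n:ℝ) = ((Q.eval n : ℤ) : ℝ) := eval_intCast_map (Int.castRingHom ℝ) Q n
  rw [e1, e2] at hn
  exact_mod_cast hn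

lemma comp_neg_ne_zero {p : Polynomial ℤ} (hp : p ≠ 0) : p.comp (-X) ≠ 0 := by
  intro h
  have : (p.comp (-X)).comp (-X) = p := by
    rw [comp_assoc, neg_comp, X_comp, neg_neg, comp_X]
  rw [h, zero_comp] at this
  exact hp this.symm

lemma comp_neg_degree (p : Polynomial ℤ) (hp : p ≠ 0) : (p.comp (-X)).degree = p.degree := by
  have h1 : (p.comp (-X)).natDegree = p.natDegree := by
    rw [natDegree_comp, natDegree_neg, natDegree_X, mul_one]
  rw [degree_eq_natDegree (comp_neg_ne_zero hp), degree_eq_natDegree hp, h1]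

lemma bad_set_finite (S Q : Polynomial ℤ) (hq : 0 < Q.degree) (hlt : S.degree < Q.degree) :
    {n : ℤ | ¬ (|S.eval n| < 2 * |Q.eval n| - 1)}.Finite := by
  rw [← Filter.eventually_cofinite]
  rw [Int.cofinite_eq, eventually_sup]
  constructor
  · -- atBot
    have hQ0 : Q ≠ 0 := fun h => by simp [h] at hq
    have hqc : 0 < (Q.comp (-X)).degree := by rwa [comp_neg_degree Q hQ0]
    have hltc : (S.comp (-X)).degree < (Q.comp (-X)).degree := by
      rcases eq_or_ne S 0 with rfl | hS0
      · rw [zero_comp, degree_zero]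
        exact lt_of_le_of_lt bot_le hqc
      · rw [comp_neg_degree S hS0, comp_neg_degree Q hQ0]; exact hlt
    have h := int_bound_atTop (S.comp (-X)) (Q.comp (-X)) hqc hltc
    have hneg : Tendsto (fun n : ℤ => -n) atBot atTop := tendsto_neg_atBot_atTop
    filter_upwards [hneg.eventually h] with n hn
    simpa [eval_comp] using hn
  · exact int_bound_atTop S Q hq hlt

/-- If `f ∈ ℤ[x]` is nonzero of even degree with leading coefficient a perfect square, then
either `f` is the square of a polynomial or `f` takes square values only finitely often. -/
theorem square_values_finite_of_even_degree (f : Polynomial ℤ) (hf : f ≠ 0)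
    (hdeg : Even f.natDegree) (a : ℤ) (hlead : f.leadingCoeff = a ^ 2) :
    (∃ g : Polynomial ℤ, f = g ^ 2) ∨ {n : ℤ | ∃ k : ℤ, f.eval n = k ^ 2}.Finite := by
  obtain ⟨r, hr⟩ := hdeg
  set e : ℕ := r with he_def
  have he : f.natDegree = 2 * e := by omega
  have ha : a ≠ 0 := by
    intro h
    apply hf
    apply leadingCoeff_eq_zero.mp
    rw [hlead, h]
    ring
  rcases Nat.eq_zero_or_pos e with he0 | hepos
  · -- constant case
    left
    refine ⟨C a, ?_⟩
    have h0 : f.natDegree = 0 := by omega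
    have := Polynomial.eq_C_of_natDegree_eq_zero h0
    rw [this]
    rw [← C_pow]
    congr 1
    rw [← hlead]
    rw [Polynomial.leadingCoeff, h0]
  -- main case
  set p : Polynomial ℚ := f.map (Int.castRingHom ℚ) with hp_def
  have hpd : ∀ i, 2*e < i → p.coeff i = 0 := by
    intro i hi
    rw [coeff_map, coeff_eq_zero_of_natDegree_lt (by omega), map_zero]
  have hpc : p.coeff (2*e) = (a:ℚ)^2 := by
    rw [coeff_map, ← he, ← Polynomial.leadingCoeff, hlead]
    push_cast [Int.coe_castRingHom]
    ring
  have haq : (a:ℚ) ≠ 0 := Int.cast_ne_zero.mpr ha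
  obtain ⟨q, hqe, hqhi, hq⟩ := approx_sqrt e p (a:ℚ) haq hpd hpc e le_rfl
  obtain ⟨D, P, hD, hP⟩ := clear_denoms q
  set S : Polynomial ℤ := C (D^2) * f - P^2 with hS_def
  -- the map of S over ℚ
  have hSmap : S.map (Int.castRingHom ℚ) = C ((D:ℚ)^2) * (p - q^2) := by
    rw [hS_def, Polynomial.map_sub, Polynomial.map_mul, map_C, Polynomial.map_pow, hP]
    push_cast [Int.coe_castRingHom, C_pow]
    ring
  -- degree of P is e
  have hqdeg : q.degree = (e : WithBot ℕ) := by
    apply le_antisymm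
    · rw [degree_le_iff_coeff_zero]
      intro m hm
      exact hqhi m (by exact_mod_cast hm)
    · exact le_degree_of_ne_zero (by rw [hqe]; exact haq)
  have hPdeg : P.degree = (e : WithBot ℕ) := by
    have hinj : Function.Injective (Int.castRingHom ℚ) := Int.cast_injective
    rw [← degree_map_eq_of_injective hinj P, hP,
      degree_C_mul (by exact_mod_cast hD : (D:ℚ) ≠ 0), hqdeg]
  have hPpos : 0 < P.degree := by rw [hPdeg]; exact_mod_cast hepos
  -- degree of S < e
  have hSdeg : S.degree < (e : WithBot ℕ) := by
    rw [degree_lt_iff_coeff_zero]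
    intro m hm
    have h1 : (S.map (Int.castRingHom ℚ)).coeff m = 0 := by
      have h0 := hq m (by omega)
      rw [hSmap, coeff_C_mul, h0, mul_zero]
    rw [coeff_map] at h1
    have h2 : ((S.coeff m : ℤ) : ℚ) = 0 := h1
    exact_mod_cast h2
  have hSP : S.degree < P.degree := by rw [hPdeg]; exact hSdeg
  -- key evaluation identity
  have hkey : ∀ n k : ℤ, f.eval n = k^2 → S.eval n = (D*k)^2 - (P.eval n)^2 := by
    intro n k hk
    rw [hS_def]
    simp [hk]
    ring
  by_cases hS0 : S = 0
  · -- f is a square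
    left
    have heq : (C D)^2 * f = P^2 := by
      have := sub_eq_zero.mp (hS_def ▸ hS0 : C (D^2) * f - P^2 = 0)
      rw [← this, C_pow]
    have hdvd : (C D)^2 ∣ P^2 := ⟨f, heq.symm⟩
    have hCD : C D ∣ P := by
      rwa [IsIntegrallyClosed.pow_dvd_pow_iff (two_ne_zero)] at hdvd
    obtain ⟨g, hg⟩ := hCD
    refine ⟨g, ?_⟩
    have hCD0 : (C D : Polynomial ℤ) ≠ 0 := by simpa using hD
    apply mul_left_cancel₀ (pow_ne_zero 2 hCD0)
    rw [heq, hg, mul_pow]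
  · -- square values finite
    right
    have hsub : {n : ℤ | ∃ k : ℤ, f.eval n = k ^ 2} ⊆
        {n : ℤ | ¬ (|S.eval n| < 2 * |P.eval n| - 1)} ∪ {n : ℤ | S.IsRoot n} := by
      rintro n ⟨k, hk⟩
      by_cases hroot : S.eval n = 0
      · exact Or.inr hroot
      · left
        have h1 := hkey n k hk
        have h2 : (D*k)^2 ≠ (P.eval n)^2 := by
          intro h
          apply hroot
          rw [h1, h, sub_self]
        have := sq_gap (D*k) (P.eval n) h2
        rw [← h1] at this
        simp only [Set.mem_setOf_eq, not_lt]
        linarith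
    exact Set.Finite.subset ((bad_set_finite S P hPpos hSP).union
      (S.finite_setOf_isRoot hS0)) hsub
end

section
/- Let N be a positive integer that is not a perfect square. Then there are infinitely many odd primes p such that the Kronecker symbol (p/N) equals −1. -/
/-- The Kronecker symbol `(p/N)` for `p` an odd prime and `N` a positive integer: writing
`N = 2^v · N₀` with `N₀` odd, it equals `χ₈(p)^v · (p/N₀)`, where `(p/N₀)` is the Jacobi
symbol and `χ₈(p) = (−1)^{(p²−1)/8}`. -/
noncomputable def kroneckerSymbol (p N : ℕ) : ℤ :=
  (ZMod.χ₈ (p : ZMod 8)) ^ (N.factorization 2) *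
    jacobiSym (p : ℤ) (N / 2 ^ (N.factorization 2))

/-- For an odd nonsquare `b`, there is `x` coprime to `b` with Jacobi symbol `(x/b) = -1`. -/
lemma exists_jacobiSym_neg_one {b : ℕ} (hb : Odd b) (hsq : ¬ IsSquare b) :
    ∃ x : ℕ, Nat.Coprime x b ∧ jacobiSym (x : ℤ) b = -1 := by
  have hb0 : b ≠ 0 := by rintro rfl; exact hsq ⟨0, rfl⟩
  -- find a prime `q` with odd exponent in `b`
  obtain ⟨c, a, hab, hc⟩ := Nat.sq_mul_squarefree b
  have hc1 : c ≠ 1 := by rintro rfl; exact hsq ⟨a, by rw [← hab]; ring⟩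
  obtain ⟨q, hq, hqc⟩ := Nat.exists_prime_and_dvd hc1
  have ha0 : a ≠ 0 := by rintro rfl; simp at hab; exact hb0 hab.symm
  have hc0 : c ≠ 0 := hc.ne_zero
  have hqb : q ∣ b := hqc.trans ⟨a ^ 2, by rw [← hab]; ring⟩
  have hq2 : q ≠ 2 := by
    rintro rfl
    exact (Nat.not_even_iff_odd.mpr hb) ((even_iff_two_dvd).mpr hqb)
  haveI : Fact q.Prime := ⟨hq⟩
  set e := b.factorization q with he_def
  have he : Odd e := by
    have h1 : c.factorization q = 1 := by
      have hle := (Nat.squarefree_iff_factorization_le_one hc0).mp hc q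
      have hge := hq.factorization_pos_of_dvd hc0 hqc
      omega
    have h2 : b.factorization q = 2 * a.factorization q + 1 := by
      rw [← hab, Nat.factorization_mul (pow_ne_zero 2 ha0) hc0,
        Nat.factorization_pow, Finsupp.add_apply, Finsupp.smul_apply, h1, smul_eq_mul]
    rw [he_def, h2]
    exact ⟨a.factorization q, by ring⟩
  have he0 : e ≠ 0 := by rintro h; rw [h] at he; simp at he
  set m := ordCompl[q] b with hm_def
  have hbm : q ^ e * m = b := Nat.ordProj_mul_ordCompl_eq_self b q
  have hm0 : m ≠ 0 := (Nat.ordCompl_pos q hb0).ne'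
  have hqm : ¬ q ∣ m := Nat.not_dvd_ordCompl hq hb0
  -- a nonsquare mod q
  obtain ⟨r, hr⟩ := FiniteField.exists_nonsquare
    (F := ZMod q) (by rw [ZMod.ringChar_zmod_n]; exact hq2)
  have hleg : legendreSym q (r.val) = -1 := by
    rw [legendreSym.eq_neg_one_iff']
    simpa [ZMod.natCast_val, ZMod.cast_id] using hr
  -- CRT
  have hco : Nat.Coprime (q ^ e) m := Nat.Coprime.pow_left e
    ((Nat.Prime.coprime_iff_not_dvd hq).mpr hqm)
  obtain ⟨x, hx1, hx2⟩ := Nat.chineseRemainder hco r.val 1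
  haveI : NeZero b := ⟨hb0⟩
  haveI : NeZero m := ⟨hm0⟩
  haveI : NeZero (q ^ e) := ⟨pow_ne_zero e hq.ne_zero⟩
  have hJm : jacobiSym (x : ℤ) m = 1 := by
    have h : ((x : ℤ) % m) = ((1 : ℤ) % m) := by
      exact_mod_cast congrArg (Nat.cast : ℕ → ℤ) hx2
    rw [jacobiSym.mod_left' h, jacobiSym.one_left]
  have hJq : jacobiSym (x : ℤ) q = -1 := by
    have hmod : x ≡ r.val [MOD q] := (Nat.ModEq.of_dvd (dvd_pow_self q he0) hx1)
    have h : ((x : ℤ) % q) = ((r.val : ℤ) % q) := by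
      exact_mod_cast congrArg (Nat.cast : ℕ → ℤ) hmod
    rw [jacobiSym.mod_left' h, ← jacobiSym.legendreSym.to_jacobiSym, hleg]
  have hJ : jacobiSym (x : ℤ) b = -1 := by
    rw [← hbm, jacobiSym.mul_right, jacobiSym.pow_right, hJq, hJm, he.neg_one_pow, mul_one]
  refine ⟨x, ?_, hJ⟩
  have hne : jacobiSym (x : ℤ) b ≠ 0 := by rw [hJ]; norm_num
  have hcop := mt jacobiSym.eq_zero_iff_not_coprime.mpr hne
  rw [not_not] at hcop
  rwa [Int.gcd_natCast_natCast] at hcop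

/-- If `N` is a positive integer that is not a perfect square, then there are infinitely many
odd primes `p` with Kronecker symbol `(p/N) = −1`. -/
theorem infinite_primes_kronecker_neg_one (N : ℕ) (hN : 0 < N) (hsq : ¬ IsSquare N) :
    {p : ℕ | p.Prime ∧ Odd p ∧ kroneckerSymbol p N = -1}.Infinite := by
  have hN0 : N ≠ 0 := hN.ne'
  set v := N.factorization 2 with hv
  set N₀ := N / 2 ^ v with hN₀def
  have hN₀0 : N₀ ≠ 0 := (Nat.ordCompl_pos 2 hN0).ne'
  have h2nd : ¬ 2 ∣ N₀ := Nat.not_dvd_ordCompl Nat.prime_two hN0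
  have hN₀odd : Odd N₀ := Nat.odd_iff.mpr (Nat.two_dvd_ne_zero.mp h2nd)
  have hsplit : 2 ^ v * N₀ = N := Nat.ordProj_mul_ordCompl_eq_self N 2
  haveI : NeZero N₀ := ⟨hN₀0⟩
  -- choose target residues
  obtain ⟨x₈, x, hu8, hu0, h2x, hval⟩ :
      ∃ (x₈ : ZMod 8) (x : ℕ), IsUnit x₈ ∧ IsUnit ((x : ZMod N₀)) ∧ x₈ ≠ 2 ∧
        (ZMod.χ₈ x₈) ^ v * jacobiSym (x : ℤ) N₀ = -1 := by
    by_cases hA : IsSquare N₀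
    · -- then v is odd
      have hvodd : Odd v := by
        rw [← Nat.not_even_iff_odd]
        intro hve
        obtain ⟨k, hk⟩ := hve
        refine hsq ?_
        rw [← hsplit, hk]
        exact IsSquare.mul ⟨2 ^ k, by rw [pow_add]⟩ hA
      refine ⟨3, 1, by decide, by simp, by decide, ?_⟩
      have h38 : ZMod.χ₈ (3 : ZMod 8) = -1 := by decide
      rw [h38, Nat.cast_one, jacobiSym.one_left, mul_one, hvodd.neg_one_pow]
    · obtain ⟨x, hxcop, hxJ⟩ := exists_jacobiSym_neg_one hN₀odd hA
      refine ⟨1, x, isUnit_one, (ZMod.isUnit_iff_coprime x N₀).mpr hxcop, by decide, ?_⟩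
      rw [hxJ, map_one, one_pow, one_mul]
  -- Dirichlet
  have hco8 : Nat.Coprime 8 N₀ := by
    have : Nat.Coprime 2 N₀ := (Nat.Prime.coprime_iff_not_dvd Nat.prime_two).mpr h2nd
    exact Nat.Coprime.pow_left 3 this
  haveI : NeZero (8 * N₀) := ⟨by positivity⟩
  set crt := ZMod.chineseRemainder hco8 with hcrt
  set a : ZMod (8 * N₀) := crt.symm (x₈, (x : ZMod N₀)) with ha
  have hua : IsUnit a := by
    obtain ⟨u, hu⟩ := hu8
    obtain ⟨w, hw⟩ := hu0
    have h : IsUnit ((x₈, (x : ZMod N₀)) : ZMod 8 × ZMod N₀) := by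
      rw [isUnit_iff_exists_inv]
      exact ⟨((u⁻¹ : _), (w⁻¹ : _)), by rw [Prod.mk_mul_mk, ← hu, ← hw]; simp⟩
    exact h.map crt.symm
  refine (Nat.infinite_setOfPred_prime_and_eq_mod hua).mono ?_
  rintro p ⟨hp, hpa⟩
  have hc := congrArg crt hpa
  rw [RingEquiv.apply_symm_apply, map_natCast] at hc
  have hc8 : (p : ZMod 8) = x₈ := by
    have := congrArg Prod.fst hc
    simpa using this
  have hc0 : (p : ZMod N₀) = (x : ZMod N₀) := by
    have := congrArg Prod.snd hc
    simpa using this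
  have hp2 : p ≠ 2 := by
    rintro rfl
    apply h2x
    rw [← hc8]
    norm_num
  have hpodd : Odd p := hp.odd_of_ne_two hp2
  refine ⟨hp, hpodd, ?_⟩
  have hJp : jacobiSym (p : ℤ) N₀ = jacobiSym (x : ℤ) N₀ := by
    have hmod : p ≡ x [MOD N₀] := (ZMod.natCast_eq_natCast_iff p x N₀).mp hc0
    have h : ((p : ℤ) % N₀) = ((x : ℤ) % N₀) := by
      exact_mod_cast congrArg (Nat.cast : ℕ → ℤ) hmod
    exact jacobiSym.mod_left' h
  show (ZMod.χ₈ (p : ZMod 8)) ^ (N.factorization 2) *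
    jacobiSym (p : ℤ) (N / 2 ^ (N.factorization 2)) = -1
  rw [← hv, ← hN₀def, hc8, hJp, hval]
end
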